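/- In a differential graded algebra over F₂, suppose a, b, x are cocycles with [a][b] = 0, [b][x] = 0 and [x][a] = 0 in cohomology, and choose cochains A, U, V with dA = ab, dU = bx, dV = xa. Then Ax + aU, Ua + bV, and Ax + bV are cocycles, and their sum (Ax + aU) + (Ua + bV) + (Ax + bV) = aU + Ua + 2Ax + 2bV is a coboundary; in particular over F₂ the three classes sum to a class in the total indeterminacy, giving 0 ∈ ⟨a,b,x⟩ + ⟨b,x,a⟩ + ⟨x,a,b⟩. -/
import Mathlib


/-- Jacobi identity for triple (Massey/Toda) products in a
graded-commutative DGA over `F₂` (over `F₂`, graded-commutative = commutative,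
and all signs vanish).  Given cocycles `a`, `b`, `x` whose pairwise products
`ab`, `bx`, `xa` are coboundaries, bounded by `A`, `U`, `V` respectively, the
three cochains `Ax + aU`, `Ua + bV`, `Ax + bV` (representatives of
`⟨a,b,x⟩`, `⟨b,x,a⟩` and `⟨x,a,b⟩ = ⟨b,a,x⟩`) are cocycles, and their sum is a
coboundary, so `0 ∈ ⟨a,b,x⟩ + ⟨b,x,a⟩ + ⟨x,a,b⟩`. -/
theorem stmt3 (R : Type*) [CommRing R] [Module (ZMod 2) R]
    (d : R →+ R) (hd2 : ∀ z, d (d z) = 0)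
    (hleib : ∀ z w, d (z * w) = d z * w + z * d w)
    (a b x : R) (hda : d a = 0) (hdb : d b = 0) (hdx : d x = 0)
    (A U V : R) (hA : d A = a * b) (hU : d U = b * x) (hV : d V = x * a) :
    d (A * x + a * U) = 0 ∧ d (U * a + b * V) = 0 ∧ d (A * x + b * V) = 0 ∧
      ∃ w : R, (A * x + a * U) + (U * a + b * V) + (A * x + b * V) = d w := by
  have h2 : ∀ z : R, z + z = 0 := fun z => by
    have h : (1 + 1 : ZMod 2) = 0 := by decide
    calc z + z = (1 : ZMod 2) • z + (1 : ZMod 2) • z := by rw [one_smul]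
    _ = ((1 + 1 : ZMod 2)) • z := (add_smul _ _ _).symm
    _ = (0 : ZMod 2) • z := by rw [h]
    _ = 0 := zero_smul _ _
  refine ⟨?_, ?_, ?_, 0, ?_⟩
  · rw [map_add, hleib, hleib, hA, hdx, hda, hU]
    linear_combination h2 (a * b * x)
  · rw [map_add, hleib, hleib, hU, hda, hdb, hV]
    linear_combination h2 (b * x * a)
  · rw [map_add, hleib, hleib, hA, hdx, hdb, hV]
    linear_combination h2 (a * b * x)
  · rw [map_zero]
    linear_combination h2 (A * x) + h2 (a * U) + h2 (b * V)
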